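/- arXiv:1405.0497 — 5 statements merged into one kernel-verified Lean document; each statement's English description precedes it below -/
import Mathlib

section
/- If a ball B in R^m is tangent externally to three pairwise disjoint unit balls B₁, B₂, B₃ (i.e., B has radius ρ and its center is at distance ρ + 1 from each of the three unit-ball centers, and the three unit-ball centers are pairwise at distance ≥ 2), then ρ ≥ 2/√3 − 1. -/
/-!
For vectors `a, b, c` in a real inner product space,
`‖a - b‖² + ‖a - c‖² + ‖b - c‖² + ‖a + b + c‖² = 3 (‖a‖² + ‖b‖² + ‖c‖²)`.
Applied to `cᵢ - c`, this bounds the sum of the pairwise squared distances of the `cᵢ`, which is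
at least `12`, by `9 (ρ + 1)²`; hence `ρ + 1 ≥ 2 / √3`.
-/

section
variable {E : Type*} [NormedAddCommGroup E] [InnerProductSpace ℝ E]

theorem norm_sub_sq_add_norm_sub_sq_add_norm_sub_sq_add_norm_add_add_sq (a b c : E) :
    ‖a - b‖ ^ 2 + ‖a - c‖ ^ 2 + ‖b - c‖ ^ 2 + ‖a + b + c‖ ^ 2 =
      3 * (‖a‖ ^ 2 + ‖b‖ ^ 2 + ‖c‖ ^ 2) := by
  simp only [norm_sub_sq_real, norm_add_sq_real, inner_add_left]
  ring

theorem dist_sq_add_dist_sq_add_dist_sq_le (p q₁ q₂ q₃ : E) :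
    dist q₁ q₂ ^ 2 + dist q₁ q₃ ^ 2 + dist q₂ q₃ ^ 2 ≤
      3 * (dist q₁ p ^ 2 + dist q₂ p ^ 2 + dist q₃ p ^ 2) := by
  have key := norm_sub_sq_add_norm_sub_sq_add_norm_sub_sq_add_norm_add_add_sq
    (q₁ - p) (q₂ - p) (q₃ - p)
  simp only [sub_sub_sub_cancel_right, ← dist_eq_norm] at key
  nlinarith [sq_nonneg ‖q₁ - p + (q₂ - p) + (q₃ - p)‖]

theorem two_div_sqrt_three_le_of_dist_eq {p q₁ q₂ q₃ : E} {r : ℝ}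
    (h₁ : dist p q₁ = r) (h₂ : dist p q₂ = r) (h₃ : dist p q₃ = r)
    (h₁₂ : 2 ≤ dist q₁ q₂) (h₁₃ : 2 ≤ dist q₁ q₃) (h₂₃ : 2 ≤ dist q₂ q₃) :
    2 / √3 ≤ r := by
  have hr : 0 ≤ r := h₁ ▸ dist_nonneg
  have hsum := dist_sq_add_dist_sq_add_dist_sq_le p q₁ q₂ q₃
  simp only [dist_comm _ p, h₁, h₂, h₃] at hsum
  have hr_sq : 4 ≤ 3 * r ^ 2 := by nlinarith
  have h3 : 0 < √3 := by positivity
  rw [div_le_iff₀ h3]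
  nlinarith [Real.sq_sqrt (show (0:ℝ) ≤ 3 by norm_num)]

end

theorem tangent_ball_radius_bound_general (m : ℕ) (ρ : ℝ)
    (c c₁ c₂ c₃ : EuclideanSpace ℝ (Fin m))
    (h1 : dist c c₁ = ρ + 1) (h2 : dist c c₂ = ρ + 1) (h3 : dist c c₃ = ρ + 1)
    (h12 : 2 ≤ dist c₁ c₂) (h13 : 2 ≤ dist c₁ c₃) (h23 : 2 ≤ dist c₂ c₃) :
    2 / Real.sqrt 3 - 1 ≤ ρ := by
  linarith [two_div_sqrt_three_le_of_dist_eq h1 h2 h3 h12 h13 h23]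

/-- If a ball of radius `ρ` in `ℝ^m` is tangent externally to three pairwise disjoint unit
balls, then `ρ ≥ 2/√3 - 1`. -/
theorem tangent_ball_radius_bound (m : ℕ) (hm : 2 ≤ m) (ρ : ℝ) (hρ : 0 ≤ ρ)
    (c c₁ c₂ c₃ : EuclideanSpace ℝ (Fin m))
    (h1 : dist c c₁ = ρ + 1) (h2 : dist c c₂ = ρ + 1) (h3 : dist c c₃ = ρ + 1)
    (h12 : 2 ≤ dist c₁ c₂) (h13 : 2 ≤ dist c₁ c₃) (h23 : 2 ≤ dist c₂ c₃) :
    2 / Real.sqrt 3 - 1 ≤ ρ :=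
  tangent_ball_radius_bound_general m ρ c c₁ c₂ c₃ h1 h2 h3 h12 h13 h23
end

section
/- For p₁, p₂, p₃ ∈ R² with |pᵢ − pⱼ| ≥ 2 for all i ≠ j, there is no point q ∈ R² with |q − pᵢ| < 2/√3 for all i = 1, 2, 3. -/
/-- If three points in the plane are pairwise at distance at least `2`, then no point is
within distance `2/√3` of all three simultaneously. -/
theorem no_point_close_to_three (p₁ p₂ p₃ q : EuclideanSpace ℝ (Fin 2))
    (h12 : 2 ≤ dist p₁ p₂) (h13 : 2 ≤ dist p₁ p₃) (h23 : 2 ≤ dist p₂ p₃) :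
    ¬ (dist q p₁ < 2 / Real.sqrt 3 ∧ dist q p₂ < 2 / Real.sqrt 3 ∧
        dist q p₃ < 2 / Real.sqrt 3) := by
  rintro ⟨h1, h2, h3⟩
  set a := p₁ - q with ha
  set b := p₂ - q with hb
  set c := p₃ - q with hc
  have s3 : Real.sqrt 3 ^ 2 = 3 := Real.sq_sqrt (by norm_num)
  have s3pos : (0:ℝ) < Real.sqrt 3 := Real.sqrt_pos.mpr (by norm_num)
  have hr2 : (2 / Real.sqrt 3) ^ 2 = 4 / 3 := by
    rw [div_pow, s3]; norm_num
  have hn1 : ‖a‖ < 2 / Real.sqrt 3 := by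
    rwa [ha, ← dist_eq_norm, dist_comm]
  have hn2 : ‖b‖ < 2 / Real.sqrt 3 := by
    rwa [hb, ← dist_eq_norm, dist_comm]
  have hn3 : ‖c‖ < 2 / Real.sqrt 3 := by
    rwa [hc, ← dist_eq_norm, dist_comm]
  have hq1 : ‖a‖ ^ 2 < 4 / 3 := by
    rw [← hr2]; exact pow_lt_pow_left₀ hn1 (norm_nonneg _) two_ne_zero
  have hq2 : ‖b‖ ^ 2 < 4 / 3 := by
    rw [← hr2]; exact pow_lt_pow_left₀ hn2 (norm_nonneg _) two_ne_zero
  have hq3 : ‖c‖ ^ 2 < 4 / 3 := by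
    rw [← hr2]; exact pow_lt_pow_left₀ hn3 (norm_nonneg _) two_ne_zero
  have d12 : ‖a - b‖ = dist p₁ p₂ := by
    rw [ha, hb, sub_sub_sub_cancel_right, dist_eq_norm]
  have d13 : ‖a - c‖ = dist p₁ p₃ := by
    rw [ha, hc, sub_sub_sub_cancel_right, dist_eq_norm]
  have d23 : ‖b - c‖ = dist p₂ p₃ := by
    rw [hb, hc, sub_sub_sub_cancel_right, dist_eq_norm]
  have e12 : ‖a - b‖ ^ 2 = ‖a‖ ^ 2 - 2 * inner ℝ a b + ‖b‖ ^ 2 := norm_sub_sq_real a b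
  have e13 : ‖a - c‖ ^ 2 = ‖a‖ ^ 2 - 2 * inner ℝ a c + ‖c‖ ^ 2 := norm_sub_sq_real a c
  have e23 : ‖b - c‖ ^ 2 = ‖b‖ ^ 2 - 2 * inner ℝ b c + ‖c‖ ^ 2 := norm_sub_sq_real b c
  have hsum : (0:ℝ) ≤ ‖a + b + c‖ ^ 2 := sq_nonneg _
  have esum : ‖a + b + c‖ ^ 2 = ‖a‖ ^ 2 + ‖b‖ ^ 2 + ‖c‖ ^ 2
      + 2 * inner ℝ a b + 2 * inner ℝ a c + 2 * inner ℝ b c := by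
    rw [norm_add_sq_real (a + b) c, norm_add_sq_real a b, inner_add_left]
    ring
  have g12 : (4:ℝ) ≤ ‖a - b‖ ^ 2 := by
    rw [d12]; calc (4:ℝ) = 2 ^ 2 := by norm_num
    _ ≤ dist p₁ p₂ ^ 2 := pow_le_pow_left₀ (by norm_num) h12 2
  have g13 : (4:ℝ) ≤ ‖a - c‖ ^ 2 := by
    rw [d13]; calc (4:ℝ) = 2 ^ 2 := by norm_num
    _ ≤ dist p₁ p₃ ^ 2 := pow_le_pow_left₀ (by norm_num) h13 2
  have g23 : (4:ℝ) ≤ ‖b - c‖ ^ 2 := by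
    rw [d23]; calc (4:ℝ) = 2 ^ 2 := by norm_num
    _ ≤ dist p₂ p₃ ^ 2 := pow_le_pow_left₀ (by norm_num) h23 2
  linarith [hsum, esum, e12, e13, e23, g12, g13, g23, hq1, hq2, hq3]
end

section
/- Let C_i and C_j be closed convex sets in R³ with disjoint interiors, both containing a unit ball, with C_i the closed unit-radius neighborhood of a line a_i. Let H be a supporting hyperplane of C_i separating the interiors of C_i and C_j. If y and z lie on the circle of radius 2/√3 centered at a point x ∈ a_i in the plane p through x orthogonal to a_i, and each of y, z is equidistant from C_i and C_j, then the angle ∠yxz ≤ 2 arccos(√3 − 1). -/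
open EuclideanGeometry Metric

lemma le_infDist' {E : Type*} [MetricSpace E] {s : Set E} (hne : s.Nonempty) {x : E} {b : ℝ}
    (h : ∀ y ∈ s, b ≤ dist x y) : b ≤ infDist x s :=
  le_of_not_gt fun hlt => by
    obtain ⟨y, hy, hd⟩ := (Metric.infDist_lt_iff hne).1 hlt
    exact absurd hd (not_lt.2 (h y hy))

lemma half_aux (A D : ℝ) (hD : D ≠ 0) : A/(2*D)*D = A/2 := by
  field_simp

lemma norm_decomp {E : Type*} [NormedAddCommGroup E] [InnerProductSpace ℝ E] (a u : E)
    (hu : ‖u‖ = 1) :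
    ‖a - (inner ℝ a u : ℝ) • u‖^2 = ‖a‖^2 - (inner ℝ a u : ℝ)^2 := by
  rw [norm_sub_sq_real, real_inner_smul_right, norm_smul, hu, mul_one, Real.norm_eq_abs, sq_abs]
  ring

lemma inner_decomp {E : Type*} [NormedAddCommGroup E] [InnerProductSpace ℝ E] (a b u : E)
    (hu : ‖u‖ = 1) :
    (inner ℝ (a - (inner ℝ a u : ℝ) • u) (b - (inner ℝ b u : ℝ) • u) : ℝ)
      = (inner ℝ a b : ℝ) - (inner ℝ a u : ℝ) * (inner ℝ b u : ℝ) := by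
  have huu : (inner ℝ u u : ℝ) = 1 := by
    rw [real_inner_self_eq_norm_sq, hu]; norm_num
  simp only [inner_sub_left, inner_sub_right, real_inner_smul_left, real_inner_smul_right, huu]
  rw [real_inner_comm u b]
  ring

lemma hM_aux (q S T : ℝ) (hq : q^2 = 3) (hq1 : 1 ≤ q) (hq2 : q ≤ 2)
    (hst : (2 - 2*q/3) * (2 - 2*q/3) ≤ S * T) : 0 ≤ S*T - (4/3)*(7 - 4*q) := by
  nlinarith

lemma poly_key (q s t : ℝ) (hq : q^2 = 3) (hq1 : 1 ≤ q)
    (hs : 2 - 2*q/3 ≤ s) (hs' : s ≤ 2*q/3)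
    (ht : 2 - 2*q/3 ≤ t) (ht' : t ≤ 2*q/3) :
    (4/3 - s^2) * (4/3 - t^2) ≤ (s*t - (4/3)*(7 - 4*q))^2 := by
  nlinarith [sq_nonneg (s - t), mul_nonneg (sub_nonneg.2 hs) (sub_nonneg.2 ht),
    mul_nonneg (sub_nonneg.2 hs') (sub_nonneg.2 ht'),
    mul_nonneg (sub_nonneg.2 hs) (sub_nonneg.2 hs'),
    mul_nonneg (sub_nonneg.2 ht) (sub_nonneg.2 ht')]

set_option maxHeartbeats 1000000 in
/-- Bezdek–Kuperberg angle bound: if `Cᵢ` is a unit cylinder in `ℝ³` with axis through `x`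
in direction `d`, `Cⱼ` is a closed convex body with interior disjoint from `Cᵢ` containing
a unit ball, `H = {w : ⟪w, u⟫ = c}` is a supporting hyperplane of `Cᵢ` separating the
interiors of `Cᵢ` and `Cⱼ`, and `y, z` lie on the circle of radius `2/√3` centered at
`x` in the plane through `x` orthogonal to the axis, each equidistant from `Cᵢ` and `Cⱼ`,
then `∠ y x z ≤ 2 arccos (√3 - 1)`. -/
theorem angle_bound_cylinders
    (Ci Cj : Set (EuclideanSpace ℝ (Fin 3)))
    (hCi_closed : IsClosed Ci) (hCi_conv : Convex ℝ Ci)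
    (hCj_closed : IsClosed Cj) (hCj_conv : Convex ℝ Cj)
    (hdisj : Disjoint (interior Ci) (interior Cj))
    (bj : EuclideanSpace ℝ (Fin 3)) (hball : closedBall bj 1 ⊆ Cj)
    (x d : EuclideanSpace ℝ (Fin 3)) (hd : ‖d‖ = 1)
    (hCi_cyl : Ci = {w | Metric.infDist w {p | ∃ t : ℝ, p = x + t • d} ≤ 1})
    (u : EuclideanSpace ℝ (Fin 3)) (hu : ‖u‖ = 1) (c : ℝ)
    (hsupp : ∀ w ∈ Ci, (inner ℝ w u : ℝ) ≤ c)
    (htouch : ∃ w ∈ Ci, (inner ℝ w u : ℝ) = c)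
    (hsep : ∀ w ∈ interior Cj, c ≤ (inner ℝ w u : ℝ))
    (y z : EuclideanSpace ℝ (Fin 3))
    (hy_plane : (inner ℝ (y - x) d : ℝ) = 0) (hz_plane : (inner ℝ (z - x) d : ℝ) = 0)
    (hy_circ : dist y x = 2 / Real.sqrt 3) (hz_circ : dist z x = 2 / Real.sqrt 3)
    (hy_eq : Metric.infDist y Ci = Metric.infDist y Cj)
    (hz_eq : Metric.infDist z Ci = Metric.infDist z Cj) :
    ∠ y x z ≤ 2 * Real.arccos (Real.sqrt 3 - 1) := by
  have hq : (Real.sqrt 3)^2 = 3 := Real.sq_sqrt (by norm_num)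
  set q : ℝ := Real.sqrt 3 with hqdef
  have hq0 : 0 < q := Real.sqrt_pos.2 (by norm_num)
  have hq1 : 1 ≤ q := by nlinarith
  have hq2 : q ≤ 2 := by nlinarith
  set r : ℝ := 2 / q with hrdef
  have hr0 : 0 < r := by positivity
  have hr1 : 1 < r := by rw [hrdef, lt_div_iff₀ hq0]; nlinarith
  have hrq : r = 2*q/3 := by rw [hrdef, div_eq_iff hq0.ne']; nlinarith
  have hr2 : r^2 = 4/3 := by rw [hrq]; nlinarith
  -- the axis
  have hxL : x ∈ {p : EuclideanSpace ℝ (Fin 3) | ∃ t : ℝ, p = x + t • d} := by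
    show ∃ t : ℝ, x = x + t • d
    exact ⟨0, by simp⟩
  have hLne : Set.Nonempty {p : EuclideanSpace ℝ (Fin 3) | ∃ t : ℝ, p = x + t • d} := ⟨x, hxL⟩
  have haxis : ∀ t : ℝ, x + t • d ∈ Ci := by
    intro t
    rw [hCi_cyl]
    show infDist _ _ ≤ 1
    rw [infDist_zero_of_mem (show x + t • d ∈ {p : EuclideanSpace ℝ (Fin 3) | ∃ t' : ℝ, p = x + t' • d} from ⟨t, rfl⟩)]
    norm_num
  -- u is orthogonal to d
  have hdu : (inner ℝ d u : ℝ) = 0 := by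
    by_contra h
    have h1 := hsupp _ (haxis ((c - inner ℝ x u + 1)/(inner ℝ d u : ℝ)))
    rw [inner_add_left, real_inner_smul_left, div_mul_cancel₀ _ h] at h1
    linarith
  -- c = ⟪x,u⟫ + 1
  have huu : (inner ℝ u u : ℝ) = 1 := by
    rw [real_inner_self_eq_norm_sq, hu]; norm_num
  have hcle : (inner ℝ x u : ℝ) + 1 ≤ c := by
    have hmem : x + u ∈ Ci := by
      rw [hCi_cyl]
      show infDist _ _ ≤ 1
      calc infDist (x + u) _ ≤ dist (x + u) x := infDist_le_dist_of_mem hxL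
        _ = 1 := by rw [dist_eq_norm, add_sub_cancel_left, hu]
    have := hsupp _ hmem
    rw [inner_add_left, huu] at this
    linarith
  have hcge : c ≤ (inner ℝ x u : ℝ) + 1 := by
    obtain ⟨w, hw, hwc⟩ := htouch
    rw [hCi_cyl] at hw
    have key : (inner ℝ w u : ℝ) - inner ℝ x u ≤ infDist w {p : EuclideanSpace ℝ (Fin 3) | ∃ t : ℝ, p = x + t • d} := by
      apply le_infDist' hLne
      rintro p ⟨t, rfl⟩
      have h2 : (inner ℝ (w - (x + t • d)) u : ℝ) ≤ ‖w - (x + t • d)‖ := by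
        calc (inner ℝ (w - (x + t • d)) u : ℝ) ≤ ‖w - (x + t • d)‖ * ‖u‖ := real_inner_le_norm _ _
          _ = ‖w - (x + t • d)‖ := by rw [hu, mul_one]
      rw [inner_sub_left, inner_add_left, real_inner_smul_left, hdu] at h2
      rw [dist_eq_norm]
      linarith
    have hw1 : infDist w {p : EuclideanSpace ℝ (Fin 3) | ∃ t : ℝ, p = x + t • d} ≤ 1 := hw
    linarith
  have hc : c = (inner ℝ x u : ℝ) + 1 := le_antisymm hcge hcle
  -- Cj lies in the halfspace
  have hbj : bj ∈ interior Cj :=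
    interior_maximal (ball_subset_closedBall.trans hball) isOpen_ball (mem_ball_self one_pos)
  have hCj_half : ∀ w ∈ Cj, c ≤ (inner ℝ w u : ℝ) := by
    intro w hw
    by_contra hlt
    push_neg at hlt
    rcases le_or_gt (inner ℝ bj u : ℝ) (inner ℝ w u) with hb | hb
    · have h1 := hsep bj hbj
      linarith
    · have hδ : (0:ℝ) < inner ℝ bj u - inner ℝ w u := by linarith
      set t : ℝ := min 1 ((c - inner ℝ w u)/(2*((inner ℝ bj u : ℝ) - inner ℝ w u))) with htdef
      have ht0 : 0 < t := lt_min one_pos (div_pos (by linarith) (by linarith))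
      have ht1 : t ≤ 1 := min_le_left _ _
      have hmem := hCj_conv.add_smul_sub_mem_interior hw hbj ⟨ht0, ht1⟩
      have h2 := hsep _ hmem
      rw [inner_add_left, real_inner_smul_left, inner_sub_left] at h2
      have h3 : t * ((inner ℝ bj u : ℝ) - inner ℝ w u) ≤ (c - inner ℝ w u)/2 := by
        have h4 := min_le_right 1 ((c - inner ℝ w u)/(2*((inner ℝ bj u : ℝ) - inner ℝ w u)))
        calc t * ((inner ℝ bj u : ℝ) - inner ℝ w u)
            ≤ ((c - inner ℝ w u)/(2*((inner ℝ bj u : ℝ) - inner ℝ w u))) * ((inner ℝ bj u : ℝ) - inner ℝ w u) :=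
              mul_le_mul_of_nonneg_right h4 hδ.le
          _ = (c - inner ℝ w u)/2 := half_aux _ _ hδ.ne'
      linarith
  have hCjne : Cj.Nonempty := ⟨bj, hball (mem_closedBall_self (by norm_num))⟩
  -- key bound for points on the circle
  have bound : ∀ v : EuclideanSpace ℝ (Fin 3), (inner ℝ (v - x) d : ℝ) = 0 → dist v x = r →
      Metric.infDist v Ci = Metric.infDist v Cj → 2 - r ≤ (inner ℝ (v - x) u : ℝ) := by
    intro v hvp hvc hveq
    have hnv : ‖v - x‖ = r := by rw [← dist_eq_norm]; exact hvc
    -- infDist v Ci ≤ r - 1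
    have hCi_le : infDist v Ci ≤ r - 1 := by
      have hw0 : x + (1/r) • (v - x) ∈ Ci := by
        rw [hCi_cyl]
        show infDist _ _ ≤ 1
        calc infDist (x + (1/r) • (v - x)) _ ≤ dist (x + (1/r) • (v - x)) x :=
              infDist_le_dist_of_mem hxL
          _ = 1 := by
              rw [dist_eq_norm, add_sub_cancel_left, norm_smul, hnv, Real.norm_eq_abs,
                abs_of_pos (by positivity : (0:ℝ) < 1/r)]
              field_simp
      calc infDist v Ci ≤ dist v (x + (1/r) • (v - x)) := infDist_le_dist_of_mem hw0
        _ = r - 1 := by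
            rw [dist_eq_norm]
            have heq : v - (x + (1/r) • (v - x)) = (1 - 1/r) • (v - x) := by
              rw [sub_smul, one_smul]; abel
            rw [heq, norm_smul, hnv, Real.norm_eq_abs,
              abs_of_nonneg (by rw [sub_nonneg]; rw [div_le_one hr0]; linarith)]
            field_simp
    -- infDist v Cj ≥ c - ⟪v,u⟫
    have hCj_ge : c - (inner ℝ v u : ℝ) ≤ infDist v Cj := by
      apply le_infDist' hCjne
      intro w hw
      have h2 : (inner ℝ (w - v) u : ℝ) ≤ ‖w - v‖ := by
        calc (inner ℝ (w - v) u : ℝ) ≤ ‖w - v‖ * ‖u‖ := real_inner_le_norm _ _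
          _ = ‖w - v‖ := by rw [hu, mul_one]
      rw [inner_sub_left] at h2
      have h3 := hCj_half w hw
      rw [dist_eq_norm, norm_sub_rev]
      linarith
    rw [inner_sub_left]
    rw [hveq] at hCi_le
    rw [hc] at hCj_ge
    linarith
  have hyb := bound y hy_plane hy_circ hy_eq
  have hzb := bound z hz_plane hz_circ hz_eq
  -- set up
  set a : EuclideanSpace ℝ (Fin 3) := y - x with hadef
  set b : EuclideanSpace ℝ (Fin 3) := z - x with hbdef
  have hna : ‖a‖ = r := by rw [hadef, ← dist_eq_norm]; exact hy_circ
  have hnb : ‖b‖ = r := by rw [hbdef, ← dist_eq_norm]; exact hz_circ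
  have hs_up : (inner ℝ a u : ℝ) ≤ r := by
    calc (inner ℝ a u : ℝ) ≤ ‖a‖ * ‖u‖ := real_inner_le_norm _ _
      _ = r := by rw [hna, hu, mul_one]
  have ht_up : (inner ℝ b u : ℝ) ≤ r := by
    calc (inner ℝ b u : ℝ) ≤ ‖b‖ * ‖u‖ := real_inner_le_norm _ _
      _ = r := by rw [hnb, hu, mul_one]
  have expand_a : ‖a - (inner ℝ a u : ℝ) • u‖^2 = r^2 - (inner ℝ a u : ℝ)^2 := by
    rw [norm_decomp a u hu, hna]
  have expand_b : ‖b - (inner ℝ b u : ℝ) • u‖^2 = r^2 - (inner ℝ b u : ℝ)^2 := by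
    rw [norm_decomp b u hu, hnb]
  have inner_exp := inner_decomp a b u hu
  have cs : -(‖a - (inner ℝ a u : ℝ) • u‖ * ‖b - (inner ℝ b u : ℝ) • u‖)
      ≤ (inner ℝ (a - (inner ℝ a u : ℝ) • u) (b - (inner ℝ b u : ℝ) • u) : ℝ) :=
    (abs_le.1 (abs_real_inner_le_norm _ _)).1
  have hna' : ‖a - (inner ℝ a u : ℝ) • u‖ = Real.sqrt (r^2 - (inner ℝ a u : ℝ)^2) := by
    rw [← expand_a, Real.sqrt_sq (norm_nonneg _)]
  have hnb' : ‖b - (inner ℝ b u : ℝ) • u‖ = Real.sqrt (r^2 - (inner ℝ b u : ℝ)^2) := by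
    rw [← expand_b, Real.sqrt_sq (norm_nonneg _)]
  have hsA : 0 ≤ r^2 - (inner ℝ a u : ℝ)^2 := by rw [← expand_a]; positivity
  have htA : 0 ≤ r^2 - (inner ℝ b u : ℝ)^2 := by rw [← expand_b]; positivity
  have hpos2 : (0:ℝ) < 2 - 2*q/3 := by linarith
  have hM : 0 ≤ (inner ℝ a u : ℝ)*(inner ℝ b u : ℝ) - (4/3)*(7 - 4*q) := by
    have hst : (2 - 2*q/3) * (2 - 2*q/3) ≤ (inner ℝ a u : ℝ) * (inner ℝ b u : ℝ) :=
      mul_le_mul (by rw [hrq] at hyb; exact hyb) (by rw [hrq] at hzb; exact hzb)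
        hpos2.le (by rw [hrq] at hyb; linarith)
    exact hM_aux q _ _ hq hq1 hq2 hst
  have hpk := poly_key q (inner ℝ a u : ℝ) (inner ℝ b u : ℝ) hq hq1 (by rw [hrq] at hyb; exact hyb)
    (by rw [hrq] at hs_up; exact hs_up) (by rw [hrq] at hzb; exact hzb)
    (by rw [hrq] at ht_up; exact ht_up)
  have hsqrt : Real.sqrt (r^2 - (inner ℝ a u : ℝ)^2) * Real.sqrt (r^2 - (inner ℝ b u : ℝ)^2) ≤ (inner ℝ a u : ℝ)*(inner ℝ b u : ℝ) - (4/3)*(7 - 4*q) := by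
    rw [← Real.sqrt_mul hsA]
    calc Real.sqrt ((r^2 - (inner ℝ a u : ℝ)^2) * (r^2 - (inner ℝ b u : ℝ)^2))
        ≤ Real.sqrt (((inner ℝ a u : ℝ)*(inner ℝ b u : ℝ) - (4/3)*(7 - 4*q))^2) := by
          apply Real.sqrt_le_sqrt
          rw [hr2]
          exact hpk
      _ = (inner ℝ a u : ℝ)*(inner ℝ b u : ℝ) - (4/3)*(7 - 4*q) := Real.sqrt_sq hM
  have inner_ab : (4/3)*(7 - 4*q) ≤ (inner ℝ a b : ℝ) := by
    have := cs
    rw [inner_exp, hna', hnb'] at this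
    linarith
  -- conclude via cosine
  have hangle : ∠ y x z = InnerProductGeometry.angle a b := by
    rw [EuclideanGeometry.angle, vsub_eq_sub, vsub_eq_sub]
  have ha0 : a ≠ 0 := by
    intro h
    rw [h, norm_zero] at hna
    linarith
  have hcos : Real.cos (∠ y x z) = (inner ℝ a b : ℝ) / (r * r) := by
    rw [hangle, InnerProductGeometry.cos_angle, hna, hnb]
  have hrr : r * r = 4/3 := by rw [← hr2]; ring
  have hcos_ge : 7 - 4*q ≤ Real.cos (∠ y x z) := by
    rw [hcos, hrr, le_div_iff₀ (by norm_num : (0:ℝ) < 4/3)]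
    linarith
  have harc : Real.cos (2 * Real.arccos (q - 1)) = 7 - 4*q := by
    rw [Real.cos_two_mul, Real.cos_arccos (by linarith) (by linarith)]
    linear_combination 2*hq
  by_contra hgt
  push_neg at hgt
  have hlt := Real.cos_lt_cos_of_nonneg_of_le_pi
    (mul_nonneg (by norm_num) (Real.arccos_nonneg _)) (EuclideanGeometry.angle_le_pi _ _ _) hgt
  rw [harc] at hlt
  linarith
end

section
/- If two points y, z on a circle of radius 2/√3 centered at x both lie in the closed half-plane {w : ⟨w − x, u⟩ ≥ 1} for some unit vector u (i.e., beyond a line tangent to the unit circle centered at x), then the angle ∠yxz is at most 2 arccos(√3 − 1). -/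
open EuclideanGeometry

/-! Each of `y - x`, `z - x` makes an angle at most `arccos (√3 / 2)` with `u`, because its
component along `u` is at least `1` while its length is `2 / √3`. The triangle inequality for
angles bounds `∠ y x z` by twice that, and `√3 - 1 ≤ √3 / 2`. -/

namespace InnerProductGeometry

variable {V : Type*} [NormedAddCommGroup V] [InnerProductSpace ℝ V]

theorem angle_le_arccos_of_le_inner {a u : V} {c : ℝ} (hu : ‖u‖ = 1) (hc : c ≤ inner ℝ a u) :
    angle a u ≤ Real.arccos (c / ‖a‖) := by
  rw [angle, hu, mul_one]
  exact Real.antitone_arccos (div_le_div_of_nonneg_right hc (norm_nonneg a))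

end InnerProductGeometry

theorem sqrt_three_sub_one_le_inv_two_div_sqrt_three :
    Real.sqrt 3 - 1 ≤ 1 / (2 / Real.sqrt 3) := by
  have hsq : Real.sqrt 3 ^ 2 = 3 := Real.sq_sqrt (by norm_num)
  rw [one_div_div]
  nlinarith [Real.sqrt_nonneg 3]

/-- If two points `y, z` on the circle of radius `2/√3` centered at `x` both lie in the
closed half-plane `{w : ⟪w - x, u⟫ ≥ 1}` beyond a line tangent to the unit circle centered
at `x`, then the angle `∠ y x z` is at most `2 arccos (√3 - 1)`. -/
theorem angle_bound_halfplane (x y z u : EuclideanSpace ℝ (Fin 2)) (hu : ‖u‖ = 1)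
    (hy : ‖y - x‖ = 2 / Real.sqrt 3) (hz : ‖z - x‖ = 2 / Real.sqrt 3)
    (hyu : 1 ≤ (inner ℝ (y - x) u : ℝ)) (hzu : 1 ≤ (inner ℝ (z - x) u : ℝ)) :
    ∠ y x z ≤ 2 * Real.arccos (Real.sqrt 3 - 1) := by
  have near_u : ∀ w : EuclideanSpace ℝ (Fin 2), ‖w‖ = 2 / Real.sqrt 3 → 1 ≤ inner ℝ w u →
      InnerProductGeometry.angle w u ≤ Real.arccos (Real.sqrt 3 - 1) := fun w hw hwu =>
    (InnerProductGeometry.angle_le_arccos_of_le_inner hu hwu).trans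
      (hw ▸ Real.antitone_arccos sqrt_three_sub_one_le_inv_two_div_sqrt_three)
  calc ∠ y x z = InnerProductGeometry.angle (y - x) (z - x) := rfl
    _ ≤ InnerProductGeometry.angle (y - x) u + InnerProductGeometry.angle u (z - x) :=
      InnerProductGeometry.angle_le_angle_add_angle _ _ _
    _ ≤ 2 * Real.arccos (Real.sqrt 3 - 1) := by
      rw [InnerProductGeometry.angle_comm u]
      linarith [near_u _ hy hyu, near_u _ hz hzu]
end

section
/- Blichfeldt's sphere packing bound: for any packing of R^n by unit balls, the upper density is at most (n+2)/2^{(n+2)/2}. -/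
open MeasureTheory Filter Finset Metric Set Module
open scoped ENNReal Real Topology InnerProductSpace

/-!
Blichfeldt's gauge, here `ENNReal.ofReal (1 - ‖x‖ ^ 2 / 2)` (the positive part of `f₀`), sums to
at most `1` over translates by points at mutual distances `≥ 2`: for `k` such points `vᵢ`,
`∑ᵢ ∑ⱼ ‖vᵢ - vⱼ‖² = 2k ∑ᵢ ‖vᵢ‖² - 2 ‖∑ᵢ vᵢ‖²` is at least `4k(k - 1)`, so `∑ᵢ ‖vᵢ‖² ≥ 2(k - 1)`.
Integrate the translates centred at the packing centres over the ball of radius `r + 1 + √2`: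
every packing ball meeting the ball of radius `r` contributes the full integral of the gauge,
`vol(B) · 2^{(n+2)/2} / (n+2)` by the layer cake formula, while the total is at most the volume
of the larger ball, and `vol(B(r + 1 + √2)) / vol(B(r)) → 1`.
-/

section SumOfSquares

variable {E ι : Type*} [NormedAddCommGroup E] {s : Finset ι} {v : ι → E}

theorem four_mul_card_sub_one_le_sum_norm_sub_sq
    (hs : (s : Set ι).Pairwise fun i j => 2 ≤ dist (v i) (v j)) {i : ι} (hi : i ∈ s) :
    4 * (#s - 1 : ℝ) ≤ ∑ j ∈ s, ‖v i - v j‖ ^ 2 := by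
  classical
  rw [← add_sum_erase s _ hi, sub_self, norm_zero, zero_pow two_ne_zero, zero_add,
    ← cast_card_erase_of_mem hi, mul_comm, ← nsmul_eq_mul]
  refine card_nsmul_le_sum _ _ _ fun j hj => ?_
  have h2 : 2 ≤ ‖v i - v j‖ := by
    simpa only [dist_eq_norm] using hs hi (mem_of_mem_erase hj) (ne_of_mem_erase hj).symm
  nlinarith

variable [InnerProductSpace ℝ E]

theorem sum_sum_norm_sub_sq (s : Finset ι) (v : ι → E) :
    ∑ i ∈ s, ∑ j ∈ s, ‖v i - v j‖ ^ 2 =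
      2 * #s * ∑ i ∈ s, ‖v i‖ ^ 2 - 2 * ‖∑ i ∈ s, v i‖ ^ 2 := by
  have hgram : ∑ i ∈ s, ∑ j ∈ s, ⟪v i, v j⟫_ℝ = ‖∑ i ∈ s, v i‖ ^ 2 := by
    rw [← real_inner_self_eq_norm_sq, sum_inner]
    simp_rw [inner_sum]
  simp only [norm_sub_sq_real, sum_add_distrib, sum_sub_distrib, ← mul_sum, hgram, sum_const,
    nsmul_eq_mul]
  ring

theorem sum_one_sub_norm_sq_div_two_le_one
    (hs : (s : Set ι).Pairwise fun i j => 2 ≤ dist (v i) (v j)) :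
    ∑ i ∈ s, (1 - ‖v i‖ ^ 2 / 2) ≤ 1 := by
  rcases s.eq_empty_or_nonempty with rfl | hne
  · simp
  have hk : (0 : ℝ) < #s := by exact_mod_cast hne.card_pos
  have hpairs : #s * (4 * (#s - 1 : ℝ)) ≤ 2 * #s * ∑ i ∈ s, ‖v i‖ ^ 2 := by
    calc #s * (4 * (#s - 1 : ℝ)) ≤ ∑ i ∈ s, ∑ j ∈ s, ‖v i - v j‖ ^ 2 := by
          rw [← nsmul_eq_mul]
          exact card_nsmul_le_sum _ _ _ fun i hi =>
            four_mul_card_sub_one_le_sum_norm_sub_sq hs hi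
      _ ≤ 2 * #s * ∑ i ∈ s, ‖v i‖ ^ 2 := by
          rw [sum_sum_norm_sub_sq]
          linarith [sq_nonneg ‖∑ i ∈ s, v i‖]
  have hsq : 2 * (#s - 1 : ℝ) ≤ ∑ i ∈ s, ‖v i‖ ^ 2 := by nlinarith
  rw [sum_sub_distrib, sum_const, nsmul_one, ← sum_div]
  linarith

theorem tsum_ofReal_one_sub_norm_sub_sq_div_two_le_one (c : ι → E)
    (hsep : Pairwise fun i j => 2 ≤ dist (c i) (c j)) (x : E) :
    ∑' i, ENNReal.ofReal (1 - ‖x - c i‖ ^ 2 / 2) ≤ 1 := by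
  classical
  have hsep' : Pairwise fun i j => 2 ≤ dist (x - c i) (x - c j) := by
    simpa only [dist_sub_left] using hsep
  rw [ENNReal.tsum_eq_iSup_sum]
  refine iSup_le fun s => ?_
  calc ∑ i ∈ s, ENNReal.ofReal (1 - ‖x - c i‖ ^ 2 / 2)
      = ∑ i ∈ s with 0 ≤ 1 - ‖x - c i‖ ^ 2 / 2, ENNReal.ofReal (1 - ‖x - c i‖ ^ 2 / 2) :=
        (sum_filter_of_ne fun i _ h => (ENNReal.ofReal_pos.1 (pos_iff_ne_zero.2 h)).le).symm
    _ = ENNReal.ofReal (∑ i ∈ s with 0 ≤ 1 - ‖x - c i‖ ^ 2 / 2, (1 - ‖x - c i‖ ^ 2 / 2)) :=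
        (ENNReal.ofReal_sum_of_nonneg fun i hi => (mem_filter.1 hi).2).symm
    _ ≤ 1 := ENNReal.ofReal_le_one.2 <|
        sum_one_sub_norm_sq_div_two_le_one (v := fun i => x - c i) (hsep'.set_pairwise _)

end SumOfSquares

theorem lintegral_Ioi_ofReal_sqrt_two_sub_two_mul_pow {n : ℕ} (hn : n ≠ 0) :
    ∫⁻ t in Ioi (0 : ℝ), ENNReal.ofReal (√(2 - 2 * t) ^ n) =
      ENNReal.ofReal (2 ^ (((n : ℝ) + 2) / 2) / ((n : ℝ) + 2)) := by
  have hcont : Continuous fun t : ℝ => √(2 - 2 * t) ^ n := by fun_prop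
  rw [← Ioc_union_Ioi_eq_Ioi zero_le_one,
    lintegral_union measurableSet_Ioi (Ioc_disjoint_Ioi le_rfl),
    setLIntegral_congr_fun (g := fun _ => 0) measurableSet_Ioi fun t (ht : 1 < t) => by
      simp [Real.sqrt_eq_zero'.2 (by linarith : 2 - 2 * t ≤ 0), hn],
    lintegral_zero, add_zero, ← ofReal_integral_eq_lintegral_ofReal
      (hcont.integrableOn_Icc.mono_set Ioc_subset_Icc_self) (.of_forall fun _ => by positivity),
    ← intervalIntegral.integral_of_le zero_le_one]
  congr 1
  have hp : (0 : ℝ) < n / 2 := by positivity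
  calc ∫ t in (0 : ℝ)..1, √(2 - 2 * t) ^ n = 2⁻¹ * ∫ u in (0 : ℝ)..2, √u ^ n := by
        simpa using intervalIntegral.integral_comp_sub_mul (a := 0) (b := 1) (fun u => √u ^ n)
          two_ne_zero 2
    _ = 2⁻¹ * ∫ u in (0 : ℝ)..2, u ^ ((n : ℝ) / 2) := by
        congr 1
        refine intervalIntegral.integral_congr fun u hu => ?_
        have hu : 0 ≤ u := by simp_all [Set.uIcc_of_le]
        rw [Real.sqrt_eq_rpow, ← Real.rpow_natCast, ← Real.rpow_mul hu]
        ring_nf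
    _ = 2 ^ (((n : ℝ) + 2) / 2) / ((n : ℝ) + 2) := by
        rw [integral_rpow (Or.inl (by linarith)), Real.zero_rpow (by positivity), sub_zero,
          show (n : ℝ) / 2 + 1 = ((n : ℝ) + 2) / 2 by ring]
        field_simp

section Haar

variable {E : Type*} [NormedAddCommGroup E] [MeasurableSpace E] [BorelSpace E]
  (μ : Measure E) [μ.IsAddHaarMeasure]

theorem measure_iUnion_closedBall_inter_ball_mul_lintegral_le {ι : Type*} [Countable ι]
    (c : ι → E) {g : E → ℝ≥0∞} (hg : Measurable g) (hsum : ∀ x, ∑' i, g (x - c i) ≤ 1)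
    {ρ : ℝ} (hsupp : Function.support g ⊆ closedBall 0 ρ) (R r : ℝ) :
    μ ((⋃ i, closedBall (c i) R) ∩ ball 0 r) * ∫⁻ x, g x ∂μ ≤
      μ (closedBall 0 R) * μ (ball 0 (r + R + ρ)) := by
  have hterm : ∀ i, μ (closedBall (c i) R ∩ ball 0 r) * ∫⁻ x, g x ∂μ ≤
      μ (closedBall 0 R) * ∫⁻ x in ball 0 (r + R + ρ), g (x - c i) ∂μ := by
    intro i
    rcases (closedBall (c i) R ∩ ball 0 r).eq_empty_or_nonempty with hempty | ⟨y, hyc, hy⟩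
    · simp [hempty]
    have hsupp_i : Function.support (fun x => g (x - c i)) ⊆ ball 0 (r + R + ρ) := by
      intro x hx
      have hx : dist x (c i) ≤ ρ := by
        simpa only [dist_eq_norm, mem_closedBall_zero_iff] using hsupp hx
      rw [mem_closedBall, dist_comm] at hyc
      rw [mem_ball] at hy ⊢
      linarith [dist_triangle4 x (c i) y 0]
    rw [setLIntegral_eq_of_support_subset hsupp_i, lintegral_sub_right_eq_self,
      ← Measure.addHaar_closedBall_center μ (c i)]
    gcongr
    exact inter_subset_left
  calc μ ((⋃ i, closedBall (c i) R) ∩ ball 0 r) * ∫⁻ x, g x ∂μ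
      ≤ (∑' i, μ (closedBall (c i) R ∩ ball 0 r)) * ∫⁻ x, g x ∂μ := by
        gcongr
        rw [iUnion_inter]
        exact measure_iUnion_le _
    _ = ∑' i, μ (closedBall (c i) R ∩ ball 0 r) * ∫⁻ x, g x ∂μ := ENNReal.tsum_mul_right.symm
    _ ≤ ∑' i, μ (closedBall 0 R) * ∫⁻ x in ball 0 (r + R + ρ), g (x - c i) ∂μ :=
        ENNReal.tsum_le_tsum hterm
    _ = μ (closedBall 0 R) * ∫⁻ x in ball 0 (r + R + ρ), ∑' i, g (x - c i) ∂μ := by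
        rw [ENNReal.tsum_mul_left,
          ← lintegral_tsum (f := fun i x => g (x - c i))
            fun i => (hg.comp (measurable_sub_const (c i))).aemeasurable]
    _ ≤ μ (closedBall 0 R) * ∫⁻ _ in ball 0 (r + R + ρ), 1 ∂μ := by
        gcongr
        exact hsum _
    _ = μ (closedBall 0 R) * μ (ball 0 (r + R + ρ)) := by rw [setLIntegral_one]

variable [NormedSpace ℝ E] [FiniteDimensional ℝ E]

theorem tendsto_measure_ball_add_div_measure_ball (a : ℝ) :
    Tendsto (fun r => (μ (ball (0 : E) (r + a))).toReal / (μ (ball (0 : E) r)).toReal) atTop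
      (𝓝 1) := by
  have hratio : Tendsto (fun r : ℝ => ((r + a) / r) ^ finrank ℝ E) atTop (𝓝 1) := by
    have h : Tendsto (fun r : ℝ => 1 + a * r⁻¹) atTop (𝓝 (1 + a * 0)) :=
      tendsto_const_nhds.add (tendsto_inv_atTop_zero.const_mul a)
    have h' : Tendsto (fun r : ℝ => (1 + a * r⁻¹) ^ finrank ℝ E) atTop (𝓝 1) := by
      simpa using h.pow (finrank ℝ E)
    refine h'.congr' ?_
    filter_upwards [eventually_ne_atTop 0] with r hr
    field_simp
  refine hratio.congr' ?_
  filter_upwards [eventually_gt_atTop 0, eventually_gt_atTop (-a)] with r hr hra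
  have hunit : (μ (ball (0 : E) 1)).toReal ≠ 0 :=
    (ENNReal.toReal_pos (measure_ball_pos μ 0 one_pos).ne' measure_ball_lt_top.ne).ne'
  have hra : 0 < r + a := by linarith
  rw [Measure.addHaar_ball_of_pos μ _ hra, Measure.addHaar_ball_of_pos μ _ hr,
    ENNReal.toReal_mul, ENNReal.toReal_mul, ENNReal.toReal_ofReal (by positivity),
    ENNReal.toReal_ofReal (by positivity), mul_div_mul_right _ _ hunit, div_pow]

theorem lintegral_ofReal_one_sub_norm_sq_div_two [Nontrivial E] :
    ∫⁻ x, ENNReal.ofReal (1 - ‖x‖ ^ 2 / 2) ∂μ = μ (ball 0 1) *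
      ENNReal.ofReal (2 ^ (((finrank ℝ E : ℝ) + 2) / 2) / ((finrank ℝ E : ℝ) + 2)) := by
  have hlevel : ∀ t : ℝ, 0 < t →
      {x : E | t < max (1 - ‖x‖ ^ 2 / 2) 0} = ball 0 √(2 - 2 * t) := by
    intro t ht
    ext x
    rw [mem_ofPred_eq, mem_ball_zero_iff, Real.lt_sqrt (norm_nonneg x), lt_max_iff]
    constructor
    · rintro (h | h) <;> linarith
    · intro h
      left
      linarith
  have hmax : ∀ x : E,
      ENNReal.ofReal (1 - ‖x‖ ^ 2 / 2) = ENNReal.ofReal (max (1 - ‖x‖ ^ 2 / 2) 0) := by simp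
  rw [lintegral_congr hmax,
    lintegral_eq_lintegral_meas_lt μ (f := fun x => max (1 - ‖x‖ ^ 2 / 2) 0)
      (.of_forall fun _ => le_max_right _ _) (by fun_prop)]
  calc ∫⁻ t in Ioi 0, μ {x | t < max (1 - ‖x‖ ^ 2 / 2) 0}
      = ∫⁻ t in Ioi 0, ENNReal.ofReal (√(2 - 2 * t) ^ finrank ℝ E) * μ (ball 0 1) :=
        setLIntegral_congr_fun measurableSet_Ioi fun t ht => by
          rw [hlevel t ht, Measure.addHaar_ball μ 0 (Real.sqrt_nonneg _)]
    _ = _ := by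
        rw [lintegral_mul_const' _ _ measure_ball_lt_top.ne,
          lintegral_Ioi_ofReal_sqrt_two_sub_two_mul_pow finrank_pos.ne', mul_comm]

end Haar

section Blichfeldt

variable {E : Type*} [NormedAddCommGroup E] [InnerProductSpace ℝ E] [FiniteDimensional ℝ E]
  [Nontrivial E] [MeasurableSpace E] [BorelSpace E] (μ : Measure E) [μ.IsAddHaarMeasure]

theorem measure_iUnion_closedBall_inter_ball_mul_le {ι : Type*} [Countable ι] (c : ι → E)
    (hsep : Pairwise fun i j => 2 ≤ dist (c i) (c j)) (r : ℝ) :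
    μ ((⋃ i, closedBall (c i) 1) ∩ ball 0 r) *
        ENNReal.ofReal (2 ^ (((finrank ℝ E : ℝ) + 2) / 2) / ((finrank ℝ E : ℝ) + 2)) ≤
      μ (ball 0 (r + (1 + √2))) := by
  have hsupp : Function.support (fun x : E => ENNReal.ofReal (1 - ‖x‖ ^ 2 / 2)) ⊆
      closedBall 0 √2 := by
    intro x hx
    rw [Function.mem_support, ENNReal.ofReal_ne_zero_iff] at hx
    rw [mem_closedBall_zero_iff, Real.le_sqrt (norm_nonneg x) zero_le_two]
    linarith
  have hpacking := measure_iUnion_closedBall_inter_ball_mul_lintegral_le μ c (by fun_prop)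
    (tsum_ofReal_one_sub_norm_sub_sq_div_two_le_one c hsep) hsupp 1 r
  rw [lintegral_ofReal_one_sub_norm_sq_div_two,
    Measure.addHaar_unitClosedBall_eq_addHaar_unitBall, mul_left_comm, add_assoc] at hpacking
  exact (ENNReal.mul_le_mul_iff_right (measure_ball_pos μ 0 one_pos).ne'
    measure_ball_lt_top.ne).1 hpacking

end Blichfeldt

/-- Blichfeldt's sphere packing bound: any packing of `ℝ^n` by unit balls has upper
density at most `(n+2)/2^{(n+2)/2}`. -/
theorem blichfeldt_sphere_packing_bound (n : ℕ) (hn : 1 ≤ n)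
    (c : ℕ → EuclideanSpace ℝ (Fin n))
    (hsep : Pairwise fun i j => 2 ≤ dist (c i) (c j)) :
    limsup (fun r : ℝ =>
        (volume ((⋃ i, Metric.closedBall (c i) 1) ∩
            Metric.ball (0 : EuclideanSpace ℝ (Fin n)) r)).toReal /
          (volume (Metric.ball (0 : EuclideanSpace ℝ (Fin n)) r)).toReal) atTop ≤
      ((n : ℝ) + 2) / 2 ^ (((n : ℝ) + 2) / 2) := by
  have : Nontrivial (EuclideanSpace ℝ (Fin n)) :=
    Module.nontrivial_of_finrank_pos (R := ℝ) (by rwa [finrank_euclideanSpace_fin])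
  set J : ℝ := 2 ^ (((n : ℝ) + 2) / 2) / ((n : ℝ) + 2)
  have hJ : 0 < J := by positivity
  have hcovered : ∀ r : ℝ, (volume ((⋃ i, closedBall (c i) 1) ∩ ball 0 r)).toReal ≤
      J⁻¹ * (volume (ball (0 : EuclideanSpace ℝ (Fin n)) (r + (1 + √2)))).toReal := by
    intro r
    have h := ENNReal.toReal_mono measure_ball_lt_top.ne
      (measure_iUnion_closedBall_inter_ball_mul_le volume c hsep r)
    rw [finrank_euclideanSpace_fin, ENNReal.toReal_mul, ENNReal.toReal_ofReal hJ.le] at h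
    rwa [le_inv_mul_iff₀ hJ, mul_comm]
  have hballs := (tendsto_measure_ball_add_div_measure_ball
    (volume : Measure (EuclideanSpace ℝ (Fin n))) (1 + √2)).const_mul J⁻¹
  rw [mul_one] at hballs
  refine (limsup_le_limsup (.of_forall fun r => ?_)
    (isCoboundedUnder_le_of_le atTop fun _ => by positivity) hballs.isBoundedUnder_le).trans_eq
    (by rw [hballs.limsup_eq, inv_div])
  rw [← mul_div_assoc]
  exact div_le_div_of_nonneg_right (hcovered r) ENNReal.toReal_nonneg
end
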